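/- Let C be a finite category and φ : C → D a quotient morphism of categories. If for every object c the restriction φ|_{C_c} : C_c → D_c has the property that the preimage of every idempotent of D_c is a semigroup all of whose local monoids are groups in a class H, then for every idempotent arrow e of D, the semigroup φ⁻¹(e) has all its local monoids in H, and conversely. -/

import Mathlib

/-- A finite category presented by its set of arrows with a partial composition. -/
structure FinCat (Obj : Type) where
  Arr : Type
  src : Arr → Obj
  tgt : Arr → Obj
  id : Obj → Arr
  comp : (f g : Arr) → tgt f = src g → Arr
  src_id : ∀ a, src (id a) = a
  tgt_id : ∀ a, tgt (id a) = a
  src_comp : ∀ f g h, src (comp f g h) = src f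
  tgt_comp : ∀ f g h, tgt (comp f g h) = tgt g
  id_comp : ∀ (f : Arr) (h : tgt (id (src f)) = src f), comp (id (src f)) f h = f
  comp_id : ∀ (f : Arr) (h : tgt f = src (id (tgt f))), comp f (id (tgt f)) h = f
  assoc : ∀ (f g k : Arr) (h1 : tgt f = src g) (h2 : tgt g = src k) h3 h4,
    comp (comp f g h1) k h3 = comp f (comp g k h2) h4

/-- The underlying set of the consolidation monoid `C^cd`:
arrows of `C` together with an adjoined zero and identity. -/
inductive Cd {Obj : Type} (C : FinCat Obj) where
  | zero : Cd C
  | one : Cd C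
  | arr : C.Arr → Cd C

variable {Obj : Type} [DecidableEq Obj]

/-- Multiplication of the consolidation: composition where defined, `0` otherwise,
with `1` an adjoined identity and `0` absorbing. -/
def cdMul (C : FinCat Obj) : Cd C → Cd C → Cd C
  | .one, x => x
  | .zero, _ => .zero
  | x, .one => x
  | _, .zero => .zero
  | .arr f, .arr g => if h : C.tgt f = C.src g then .arr (C.comp f g h) else .zero

theorem cdMul_zero (C : FinCat Obj) (x : Cd C) : cdMul C x Cd.zero = Cd.zero := by
  cases x <;> rfl
theorem cdZero_mul (C : FinCat Obj) (x : Cd C) : cdMul C Cd.zero x = Cd.zero := by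
  cases x <;> rfl
theorem cdMul_one (C : FinCat Obj) (x : Cd C) : cdMul C x Cd.one = x := by
  cases x <;> rfl
theorem cdOne_mul (C : FinCat Obj) (x : Cd C) : cdMul C Cd.one x = x := by
  cases x <;> rfl

theorem cdMul_assoc (C : FinCat Obj) (x y z : Cd C) :
    cdMul C (cdMul C x y) z = cdMul C x (cdMul C y z) := by
  cases x <;> cases y <;> cases z <;>
    (try simp only [cdMul_zero, cdZero_mul, cdMul_one, cdOne_mul]) <;> (try rfl)
  case arr.arr.arr f g k =>
    by_cases h1 : C.tgt f = C.src g
    · by_cases h2 : C.tgt g = C.src k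
      · show cdMul C (dite _ _ _) _ = cdMul C _ (dite _ _ _)
        rw [dif_pos h1, dif_pos h2]
        show dite _ _ _ = dite _ _ _
        rw [dif_pos (show C.tgt (C.comp f g h1) = C.src k by rw [C.tgt_comp]; exact h2),
            dif_pos (show C.tgt f = C.src (C.comp g k h2) by rw [C.src_comp]; exact h1)]
        exact congrArg Cd.arr (C.assoc f g k h1 h2 _ _)
      · show cdMul C (dite _ _ _) _ = cdMul C _ (dite _ _ _)
        rw [dif_pos h1, dif_neg h2]
        show dite _ _ _ = Cd.zero
        rw [dif_neg (show ¬ C.tgt (C.comp f g h1) = C.src k by rw [C.tgt_comp]; exact h2)]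
    · show cdMul C (dite _ _ _) _ = cdMul C _ (cdMul C _ _)
      rw [dif_neg h1]
      by_cases h2 : C.tgt g = C.src k
      · show Cd.zero = cdMul C _ (dite _ _ _)
        rw [dif_pos h2]
        show Cd.zero = dite _ _ _
        rw [dif_neg (show ¬ C.tgt f = C.src (C.comp g k h2) by rw [C.src_comp]; exact h1)]
      · show Cd.zero = cdMul C _ (dite _ _ _)
        rw [dif_neg h2, cdMul_zero]

instance cdMonoid (C : FinCat Obj) : Monoid (Cd C) where
  mul := cdMul C
  one := .one
  one_mul x := by cases x <;> rfl
  mul_one x := by cases x <;> rfl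
  mul_assoc := cdMul_assoc C

/-- Green's R-equivalence in a monoid. -/
def RE {M : Type} [Monoid M] (s t : M) : Prop := (∃ a, s * a = t) ∧ (∃ a, t * a = s)
/-- Green's L-equivalence in a monoid. -/
def LE' {M : Type} [Monoid M] (s t : M) : Prop := (∃ a, a * s = t) ∧ (∃ a, a * t = s)
/-- Green's H-equivalence in a monoid. -/
def HE {M : Type} [Monoid M] (s t : M) : Prop := RE s t ∧ LE' s t
/-- Green's J-equivalence in a monoid. -/
def JE {M : Type} [Monoid M] (s t : M) : Prop :=
  (∃ a b, a * s * b = t) ∧ (∃ a b, a * t * b = s)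

/-- Green's R-equivalence relative to a subset `S` (multipliers taken in `S`). -/
def REOn {M : Type} [Monoid M] (S : Set M) (s t : M) : Prop :=
  (∃ a ∈ S, s * a = t) ∧ (∃ a ∈ S, t * a = s)
def LEOn {M : Type} [Monoid M] (S : Set M) (s t : M) : Prop :=
  (∃ a ∈ S, a * s = t) ∧ (∃ a ∈ S, a * t = s)
def HEOn {M : Type} [Monoid M] (S : Set M) (s t : M) : Prop := REOn S s t ∧ LEOn S s t
def JEOn {M : Type} [Monoid M] (S : Set M) (s t : M) : Prop :=
  (∃ a ∈ S, ∃ b ∈ S, a * s * b = t) ∧ (∃ a ∈ S, ∃ b ∈ S, a * t * b = s)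

/-- The local monoid `C_c = C(c,c)`, viewed as a subset of the consolidation. -/
def locSet (C : FinCat Obj) (c : Obj) : Set (Cd C) :=
  {x | ∃ f : C.Arr, x = Cd.arr f ∧ C.src f = c ∧ C.tgt f = c}

/-- A quotient morphism of categories: identity on objects, surjective on arrows,
preserving sources, targets, identities and composition. -/
structure QuotMor (C D : FinCat Obj) where
  map : C.Arr → D.Arr
  map_src : ∀ f, D.src (map f) = C.src f
  map_tgt : ∀ f, D.tgt (map f) = C.tgt f
  map_id : ∀ a, map (C.id a) = D.id a
  map_comp : ∀ (f g : C.Arr) (h1 : C.tgt f = C.src g) (h2 : D.tgt (map f) = D.src (map g)),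
    map (C.comp f g h1) = D.comp (map f) (map g) h2
  surj : Function.Surjective map

/-- The induced map on consolidations: `φ` on arrows, `0 ↦ 0`, `1 ↦ 1`. -/
def cdMap {C D : FinCat Obj} (φ : QuotMor C D) : Cd C → Cd D
  | .zero => .zero
  | .one => .one
  | .arr f => .arr (φ.map f)

/-- Data exhibiting the local monoid `xTx` (for `x` an idempotent of `T`) as a group
isomorphic to the abstract group `G`: a multiplicative bijection of `G` onto
`{x t x | t ∈ T}` sending `1` to `x`. -/
structure GroupOn {M : Type} [Mul M] (T : Set M) (x : M) (G : Type) [Group G] where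
  ι : G → M
  inj : Function.Injective ι
  rng : Set.range ι = {m : M | ∃ t ∈ T, m = x * t * x}
  map_mul : ∀ a b : G, ι (a * b) = ι a * ι b
  map_one : ι 1 = x

/-- The local monoid `xTx` is a group belonging to the class `H`. -/
def IsLocalGroupIn {M : Type} [Mul M] (H : (G : Type) → [inst : Group G] → Prop)
    (T : Set M) (x : M) : Prop :=
  ∃ (G : Type) (gG : Group G), Nonempty (@GroupOn M _ T x G gG) ∧ @H G gG

theorem Cd.tgt_eq_src_of_arr_mul_arr {C : FinCat Obj} {f g k : C.Arr}
    (h : (Cd.arr f : Cd C) * Cd.arr g = Cd.arr k) : C.tgt f = C.src g := by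
  by_contra hfg
  change cdMul C (Cd.arr f) (Cd.arr g) = Cd.arr k at h
  simp [cdMul, hfg] at h

omit [DecidableEq Obj] in
theorem cdMap_eq_arr_mem_locSet {C D : FinCat Obj} (φ : QuotMor C D) {e : D.Arr} {c : Obj}
    (hs : D.src e = c) (ht : D.tgt e = c) {u : Cd C} (hu : cdMap φ u = Cd.arr e) :
    u ∈ locSet C c := by
  cases u with
  | zero => cases hu
  | one => cases hu
  | arr f =>
    obtain rfl : φ.map f = e := Cd.arr.inj hu
    exact ⟨f, rfl, by rw [← φ.map_src, hs], by rw [← φ.map_tgt, ht]⟩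

omit [DecidableEq Obj] in
theorem locSet_inter_cdMap_eq_arr {C D : FinCat Obj} (φ : QuotMor C D) {e : D.Arr} {c : Obj}
    (hs : D.src e = c) (ht : D.tgt e = c) :
    {u : Cd C | u ∈ locSet C c ∧ cdMap φ u = Cd.arr e} = {u : Cd C | cdMap φ u = Cd.arr e} :=
  Set.ext fun _ => ⟨And.right, fun hu => ⟨cdMap_eq_arr_mem_locSet φ hs ht hu, hu⟩⟩

theorem stmt_18_general (C D : FinCat Obj)
    (φ : QuotMor C D)
    (H : (G : Type) → [inst : Group G] → Prop) :
    (∀ c : Obj, ∀ ε ∈ locSet D c, ε * ε = ε →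
      ∀ x ∈ {u : Cd C | u ∈ locSet C c ∧ cdMap φ u = ε}, x * x = x →
        IsLocalGroupIn H {u : Cd C | u ∈ locSet C c ∧ cdMap φ u = ε} x) ↔
    (∀ e : D.Arr, (Cd.arr e : Cd D) * Cd.arr e = Cd.arr e →
      ∀ x ∈ {u : Cd C | cdMap φ u = Cd.arr e}, x * x = x →
        IsLocalGroupIn H {u : Cd C | cdMap φ u = Cd.arr e} x) := by
  constructor
  · intro hloc e he
    have hloop := Cd.tgt_eq_src_of_arr_mul_arr he
    rw [← locSet_inter_cdMap_eq_arr φ rfl hloop]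
    exact hloc (D.src e) (Cd.arr e) ⟨e, rfl, rfl, hloop⟩ he
  · rintro hpre c _ ⟨e, rfl, hs, ht⟩ he
    rw [locSet_inter_cdMap_eq_arr φ hs ht]
    exact hpre e he

/-- for a quotient morphism `φ : C → D` of finite categories and a class `H`
of finite groups closed under isomorphism: all restrictions `φ|_{C_c} : C_c → D_c` have
preimages of idempotents with all local monoids groups in `H` iff for every idempotent
arrow `e` of `D` the semigroup `φ⁻¹(e)` has all its local monoids groups in `H`. -/
theorem stmt_18 (C D : FinCat Obj) [Fintype Obj] [Fintype C.Arr] [Fintype D.Arr]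
    (φ : QuotMor C D)
    (H : (G : Type) → [inst : Group G] → Prop)
    (hiso : ∀ (G G' : Type) [Group G] [Group G'], Nonempty (G ≃* G') → H G → H G') :
    (∀ c : Obj, ∀ ε ∈ locSet D c, ε * ε = ε →
      ∀ x ∈ {u : Cd C | u ∈ locSet C c ∧ cdMap φ u = ε}, x * x = x →
        IsLocalGroupIn H {u : Cd C | u ∈ locSet C c ∧ cdMap φ u = ε} x) ↔
    (∀ e : D.Arr, (Cd.arr e : Cd D) * Cd.arr e = Cd.arr e →
      ∀ x ∈ {u : Cd C | cdMap φ u = Cd.arr e}, x * x = x →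
        IsLocalGroupIn H {u : Cd C | cdMap φ u = Cd.arr e} x) :=
  stmt_18_general C D φ H
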